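/- arXiv:2205.15566 — 2 statements merged into one kernel-verified Lean document; each statement's English description precedes it below -/
import Mathlib

section
/- Let K be a finite simplicial complex and σ ≠ τ two distinct nonempty simplices of K. Then st_{sd²(K)}(σ̂̂) ∩ st_{sd²(K)}(τ̂̂) = lk_{sd²(K)}(σ̂̂) ∩ lk_{sd²(K)}(τ̂̂), and this intersection is nonempty if and only if σ is a face of τ or τ is a face of σ. Moreover, in that case the intersection is the image of N(τ̂, sd(∂σ) * sd(lk_K(σ))) in lk_{sd²(K)}(σ̂̂) (resp. of N(σ̂, sd(∂τ) * sd(lk_K(τ))) in lk_{sd²(K)}(τ̂̂)) under the isomorphism sd(sd(∂σ) * sd(lk_K(σ))) → lk_{sd²(K)}(σ̂̂) (resp. sd(sd(∂τ) * sd(lk_K(τ))) → lk_{sd²(K)}(τ̂̂)) induced by λ ↦ σ * λ (resp. λ ↦ τ * λ); here, when σ is a face of τ, σ̂ is a vertex of sd(∂τ) and τ̂ denotes the vertex of sd(lk_K(σ)) corresponding to the simplex lk_τ(σ). -/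
/-!
Common combinatorial framework for Morse shellings of simplicial complexes,
following J.-Y. Welschinger, "Morse shellings out of discrete Morse functions".
-/

namespace MorseShelling

variable {V : Type*} [DecidableEq V] {W : Type*} [DecidableEq W]

/-- A (finite, combinatorial) simplicial complex: a downward-closed collection of
finite subsets (simplices) of the vertex type. -/
def IsComplex (K : Finset (Finset V)) : Prop :=
  ∀ σ ∈ K, ∀ τ ⊆ σ, τ ∈ K

/-- A relative simplicial complex `S = K \ L`, recorded as the pair `(K, L)`. -/
structure RelCplx (V : Type*) where
  K : Finset (Finset V)
  L : Finset (Finset V)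

/-- The faces of a relative simplicial complex. -/
def RelCplx.faces (S : RelCplx V) : Finset (Finset V) := S.K \ S.L

/-- Validity of a relative simplicial complex: both members are complexes and
`L` is a subcomplex of `K`. -/
def RelCplx.IsValid (S : RelCplx V) : Prop :=
  IsComplex S.K ∧ IsComplex S.L ∧ S.L ⊆ S.K

/-- Join of two collections of faces (on disjoint vertex supports). -/
def joinF (K₁ K₂ : Finset (Finset V)) : Finset (Finset V) :=
  (K₁ ×ˢ K₂).image fun p => p.1 ∪ p.2

/-- Join of two relative simplicial complexes:
`(K₁ * K₂) \ ((L₁ * K₂) ∪ (K₁ * L₂))`. -/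
def RelCplx.join (S₁ S₂ : RelCplx V) : RelCplx V :=
  ⟨joinF S₁.K S₂.K, joinF S₁.L S₂.K ∪ joinF S₁.K S₂.L⟩

/-- The star of a simplex `σ` in `K` : all faces `τ` with `σ ∪ τ ∈ K`. -/
def star (K : Finset (Finset V)) (σ : Finset V) : Finset (Finset V) :=
  K.filter fun τ => σ ∪ τ ∈ K

/-- The link of a simplex `σ` in `K` : all faces `τ` of the star disjoint from `σ`. -/
def link (K : Finset (Finset V)) (σ : Finset V) : Finset (Finset V) :=
  K.filter fun τ => σ ∪ τ ∈ K ∧ σ ∩ τ = ∅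

/-- The star of a simplex in a relative complex, `st_S(σ) = st_K(σ) \ st_L(σ)`. -/
def RelCplx.starR (S : RelCplx V) (σ : Finset V) : RelCplx V :=
  ⟨star S.K σ, star S.L σ⟩

/-- The link of a simplex in a relative complex, `lk_S(σ) = lk_K(σ) \ lk_L(σ)`. -/
def RelCplx.linkR (S : RelCplx V) (σ : Finset V) : RelCplx V :=
  ⟨link S.K σ, link S.L σ⟩

/-- The boundary complex of a simplex: all its proper faces (including `∅`). -/
def boundary (σ : Finset V) : Finset (Finset V) := σ.powerset.erase σ

/-- First barycentric subdivision: the faces are the (possibly empty) flags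
`∅ ≠ σ₀ ⊊ σ₁ ⊊ ... ⊊ σ_q` of nonempty faces of `K`, a nonempty face `σ` of `K`
becoming the vertex `σ̂ = σ`. By convention `sd ∅ = ∅`. -/
def sd (K : Finset (Finset V)) : Finset (Finset (Finset V)) :=
  if K = ∅ then ∅ else
    (K.erase ∅).powerset.filter fun c => ∀ a ∈ c, ∀ b ∈ c, a ⊆ b ∨ b ⊆ a

/-- First barycentric subdivision of a relative complex: `sd (K \ L) = sd K \ sd L`. -/
def RelCplx.sdR (S : RelCplx V) : RelCplx (Finset V) := ⟨sd S.K, sd S.L⟩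

/-- An (absolute) simplicial complex seen as a relative one. -/
def toRel (K : Finset (Finset V)) : RelCplx V := ⟨K, ∅⟩

/-- The vertex support of a relative complex. -/
def suppK (S : RelCplx V) : Finset V := S.K.sup id

/-- The ridges (codimension one faces) of a simplex. -/
def ridges (σ : Finset V) : Finset (Finset V) := σ.image fun v => σ.erase v

/-- The subcomplex of the simplex `σ` consisting of the faces contained in some
member of `R`. -/
def below (σ : Finset V) (R : Finset (Finset V)) : Finset (Finset V) :=
  σ.powerset.filter fun τ => ∃ ρ ∈ R, τ ⊆ ρ

/-- The restriction set of the basic tile `σ \ R`: the face spanned by the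
vertices opposite to the missing ridges `R`. -/
def restSet (σ : Finset V) (R : Finset (Finset V)) : Finset V :=
  σ.filter fun v => σ.erase v ∈ R

/-- A basic tile of dimension `n` and order `k`: an `n`-simplex deprived of `k`
of its ridges (together with all the faces contained in them). -/
def IsBasicTile (S : RelCplx V) (n k : ℕ) : Prop :=
  ∃ σ : Finset V, σ.card = n + 1 ∧ S.K = σ.powerset ∧
    ∃ R ⊆ ridges σ, R.card = k ∧ S.L = below σ R

/-- A Morse tile of dimension `n` and order `k`: a basic tile, possibly further
deprived of a unique face of higher codimension (its Morse face). -/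
def IsMorseTile (S : RelCplx V) (n k : ℕ) : Prop :=
  ∃ σ : Finset V, σ.card = n + 1 ∧ S.K = σ.powerset ∧
    ∃ R ⊆ ridges σ, R.card = k ∧
      (S.L = below σ R ∨
        ∃ μ ⊆ σ, μ ∉ below σ R ∧ μ.card + 2 ≤ σ.card ∧
          S.L = below σ R ∪ below σ {μ})

/-- A critical tile of dimension `n` and index `k`: either a closed simplex
(index `0`), or a basic tile of order `k` deprived of its restriction set
(this includes the dotted simplex for `k = 0` and the open simplex for `k = n`). -/
def IsCriticalTile (S : RelCplx V) (n k : ℕ) : Prop :=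
  ∃ σ : Finset V, σ.card = n + 1 ∧ S.K = σ.powerset ∧
    ((k = 0 ∧ S.L = ∅) ∨
      (k ≤ n ∧ ∃ R ⊆ ridges σ, R.card = k ∧
        S.L = below σ R ∪ below σ {restSet σ R}))

/-- A closed simplex, as a tile. -/
def IsClosedSimplexTile (S : RelCplx V) : Prop :=
  ∃ σ : Finset V, S.K = σ.powerset ∧ S.L = ∅

/-- An open simplex, as a tile: deprived of its whole boundary, incl. the empty face. -/
def IsOpenSimplexTile (S : RelCplx V) : Prop :=
  ∃ σ : Finset V, σ ≠ ∅ ∧ S.K = σ.powerset ∧ S.L = σ.powerset.erase σ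

/-- The closed simplex on vertex set `σ`, as a relative complex. -/
def closedT (σ : Finset V) : RelCplx V := ⟨σ.powerset, ∅⟩

/-- The open simplex on vertex set `σ`. -/
def openT (σ : Finset V) : RelCplx V := ⟨σ.powerset, σ.powerset.erase σ⟩

/-- The closed simplex deprived of its empty face, `σ̇` (the neutral tile when
`σ = ∅`, so that empty factors may be dropped from joins). -/
def dotT (σ : Finset V) : RelCplx V := ⟨σ.powerset, if σ = ∅ then ∅ else {∅}⟩

/-- The Morse tile `σ * θ̊ * τ̇`. -/
def splitTile (σ θ τ : Finset V) : RelCplx V :=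
  (closedT σ).join ((openT θ).join (dotT τ))

/-- A tiling of a relative simplicial complex by `N` relative facets: the tiles
are relative simplices whose underlying simplices are facets, and their faces
partition the faces of `S`. -/
structure Tiling (S : RelCplx W) (N : ℕ) where
  tile : Fin N → RelCplx W
  isFacet : ∀ i, ∃ σ ∈ S.K, (∀ τ ∈ S.K, σ ⊆ τ → τ = σ) ∧ (tile i).K = σ.powerset
  subL : ∀ i, (tile i).L ⊆ (tile i).K
  disj : ∀ i j, i ≠ j → Disjoint (tile i).faces (tile j).faces
  cover : (Finset.univ : Finset (Fin N)).biUnion (fun i => (tile i).faces) = S.faces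

/-- The union of the faces of the first `p` tiles of a tiling. -/
def Tiling.prefixFaces {S : RelCplx W} {N : ℕ} (T : Tiling S N) (p : ℕ) :
    Finset (Finset W) :=
  (Finset.univ.filter fun i : Fin N => (i : ℕ) < p).biUnion fun i => (T.tile i).faces

/-- A tiling is a shelling when each of the sets of faces of `S_p = K_p \ L`
is a relative subcomplex, i.e. `L ∪ (tiles of index < p)` is a complex. -/
def Tiling.IsShelling {S : RelCplx W} {N : ℕ} (T : Tiling S N) : Prop :=
  ∀ p ≤ N, IsComplex (S.L ∪ T.prefixFaces p)

/-- A (shelled) tiling begins with a set `F` of faces when some initial segment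
of its tiles partitions exactly `F`. -/
def Tiling.BeginsWith {S : RelCplx W} {N : ℕ} (T : Tiling S N)
    (F : Finset (Finset W)) : Prop :=
  ∃ p ≤ N, T.prefixFaces p = F

/-- A Morse tiling: all tiles are Morse tiles. -/
def Tiling.IsMorse {S : RelCplx W} {N : ℕ} (T : Tiling S N) : Prop :=
  ∀ i, ∃ n k, IsMorseTile (T.tile i) n k

/-- An h-tiling: all tiles are basic or critical tiles. -/
def Tiling.IsH {S : RelCplx W} {N : ℕ} (T : Tiling S N) : Prop :=
  ∀ i, (∃ n k, IsBasicTile (T.tile i) n k) ∨ (∃ n k, IsCriticalTile (T.tile i) n k)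

/-- `f` induces a simplicial isomorphism from `A` onto `B` (both viewed through
their collections of faces). -/
def IsSimplicialIso (f : V → W) (A : Finset (Finset V)) (B : Finset (Finset W)) : Prop :=
  Set.BijOn (fun σ : Finset V => σ.image f) ↑A ↑B

/-- `f` induces an isomorphism of relative simplicial complexes. -/
def IsRelIso (f : V → W) (S : RelCplx V) (S' : RelCplx W) : Prop :=
  Set.BijOn (fun σ : Finset V => σ.image f) ↑S.K ↑S'.K ∧
    Set.BijOn (fun σ : Finset V => σ.image f) ↑S.L ↑S'.L

/-- The first derived neighborhood `N(L, K)` of a subcomplex `L` in `K` : the union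
of the stars in `sd K` of the vertices of `L`. -/
def derivedNbhd (L K : Finset (Finset V)) : Finset (Finset (Finset V)) :=
  (L.filter fun s => s.card = 1).biUnion fun s => star (sd K) {s}

/-- The faces of the derived neighborhood `N(T, S)` of a tile `T` in a relative
complex `S`: the union of the relative stars in `sd S` of the vertices of `T`. -/
def relDerivedNbhd (T S : RelCplx V) : Finset (Finset (Finset V)) :=
  ((suppK T).biUnion fun v => ((S.sdR).starR {({v} : Finset V)}).faces) ∩ (S.sdR).faces

/-- A discrete Morse function on the finite simplicial complex `K`. -/
def IsDiscreteMorse (K : Finset (Finset V)) (f : Finset V → ℝ) : Prop :=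
  ∀ σ ∈ K, σ ≠ ∅ →
    (K.filter fun τ => σ ⊂ τ ∧ f τ ≤ f σ).card ≤ 1 ∧
    (K.filter fun θ => θ ≠ ∅ ∧ θ ⊂ σ ∧ f σ ≤ f θ).card ≤ 1

/-- A critical face of a discrete Morse function. -/
def IsCriticalFace (K : Finset (Finset V)) (f : Finset V → ℝ) (σ : Finset V) : Prop :=
  σ ∈ K ∧ σ ≠ ∅ ∧ (∀ τ ∈ K, σ ⊂ τ → f σ < f τ) ∧
    ∀ θ ∈ K, θ ≠ ∅ → θ ⊂ σ → f θ < f σ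

/-- An elementary collapse: removal of a facet `τ` together with a ridge `θ` of it
contained in no other facet. -/
def ElementaryCollapse (K K' : Finset (Finset V)) : Prop :=
  ∃ τ ∈ K, ∃ θ ∈ K, θ ⊆ τ ∧ τ.card = θ.card + 1 ∧
    (∀ ρ ∈ K, τ ⊆ ρ → ρ = τ) ∧
    (∀ ρ ∈ K, θ ⊆ ρ → ρ = θ ∨ ρ = τ) ∧
    K' = (K.erase τ).erase θ

/-- A finite simplicial complex is collapsible when some finite sequence of
elementary collapses reduces it to a single vertex. -/
def Collapsible (K : Finset (Finset V)) : Prop :=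
  ∃ v : V, Relation.ReflTransGen ElementaryCollapse K {∅, {v}}


section AuxSd
variable {α : Type*} [DecidableEq α]

lemma mem_sd' {K : Finset (Finset α)} (hK : K.Nonempty) {c : Finset (Finset α)} :
    c ∈ sd K ↔ (∀ a ∈ c, a ∈ K ∧ a ≠ ∅) ∧ (∀ a ∈ c, ∀ b ∈ c, a ⊆ b ∨ b ⊆ a) := by
  rw [sd, if_neg hK.ne_empty, Finset.mem_filter, Finset.mem_powerset]
  constructor
  · rintro ⟨h1, h2⟩
    refine ⟨fun a ha => ?_, h2⟩
    have := h1 ha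
    rw [Finset.mem_erase] at this
    exact ⟨this.2, this.1⟩
  · rintro ⟨h1, h2⟩
    exact ⟨fun a ha => Finset.mem_erase.2 ⟨(h1 a ha).2, (h1 a ha).1⟩, h2⟩

lemma empty_mem_sd {K : Finset (Finset α)} (hK : K.Nonempty) : ∅ ∈ sd K := by
  rw [mem_sd' hK]; simp

lemma sd_nonempty {K : Finset (Finset α)} (hK : K.Nonempty) : (sd K).Nonempty :=
  ⟨∅, empty_mem_sd hK⟩

lemma mem_joinF {A B : Finset (Finset α)} {x : Finset α} :
    x ∈ joinF A B ↔ ∃ a ∈ A, ∃ b ∈ B, a ∪ b = x := by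
  simp [joinF, Finset.mem_image, Finset.mem_product]
  tauto

lemma mem_star_sd_singleton {A : Finset (Finset α)} {x₀ : α}
    (hA : A.Nonempty) (hx : ({x₀} : Finset α) ∈ A) {c : Finset (Finset α)} :
    c ∈ star (sd A) {({x₀} : Finset α)} ↔ c ∈ sd A ∧ ∀ a ∈ c, x₀ ∈ a := by
  rw [star, Finset.mem_filter]
  constructor
  · rintro ⟨hc, hc2⟩
    refine ⟨hc, fun a ha => ?_⟩
    rw [mem_sd' hA] at hc2
    have hcomp := hc2.2 {x₀} (by simp) a (by simp [ha])
    rcases hcomp with h | h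
    · exact h (Finset.mem_singleton_self x₀)
    · have hane := (hc2.1 a (by simp [ha])).2
      rcases Finset.subset_singleton_iff.1 h with h' | h'
      · exact absurd h' hane
      · simp [h']
  · rintro ⟨hc, hc2⟩
    refine ⟨hc, ?_⟩
    rw [mem_sd' hA] at hc ⊢
    constructor
    · intro a ha
      rcases Finset.mem_union.1 ha with h | h
      · rw [Finset.mem_singleton] at h
        subst h
        exact ⟨hx, Finset.singleton_ne_empty _⟩
      · exact hc.1 a h
    · intro a ha b hb
      rcases Finset.mem_union.1 ha with h | h <;> rcases Finset.mem_union.1 hb with h' | h'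
      · rw [Finset.mem_singleton] at h h'; subst h; subst h'; left; rfl
      · rw [Finset.mem_singleton] at h; subst h
        exact Or.inl (Finset.singleton_subset_iff.2 (hc2 b h'))
      · rw [Finset.mem_singleton] at h'; subst h'
        exact Or.inr (Finset.singleton_subset_iff.2 (hc2 a h))
      · exact hc.2 a h b h'

lemma mem_link_sd_singleton {A : Finset (Finset α)} {x₀ : α}
    (hA : A.Nonempty) (hx : ({x₀} : Finset α) ∈ A) {c : Finset (Finset α)} :
    c ∈ link (sd A) {({x₀} : Finset α)} ↔
      (c ∈ sd A ∧ ∀ a ∈ c, x₀ ∈ a) ∧ ({x₀} : Finset α) ∉ c := by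
  rw [link, Finset.mem_filter]
  have hstar := mem_star_sd_singleton (c := c) hA hx
  rw [star, Finset.mem_filter] at hstar
  constructor
  · rintro ⟨hc, hc2, hc3⟩
    refine ⟨hstar.1 ⟨hc, hc2⟩, fun hmem => ?_⟩
    have : ({x₀} : Finset α) ∈ ({({x₀} : Finset α)} : Finset (Finset α)) ∩ c :=
      Finset.mem_inter.2 ⟨Finset.mem_singleton_self _, hmem⟩
    rw [hc3] at this
    exact absurd this (Finset.notMem_empty _)
  · rintro ⟨hc, hc3⟩
    have := hstar.2 hc
    refine ⟨this.1, this.2, ?_⟩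
    rw [Finset.eq_empty_iff_forall_notMem]
    intro y hy
    rw [Finset.mem_inter, Finset.mem_singleton] at hy
    exact hc3 (hy.1 ▸ hy.2)

end AuxSd

section PerChain
variable {V : Type*} [DecidableEq V] {K : Finset (Finset V)} {ρ : Finset V}

lemma boundary_nonempty (hρne : ρ ≠ ∅) : (boundary ρ).Nonempty :=
  ⟨∅, Finset.mem_erase.2 ⟨Ne.symm hρne, Finset.mem_powerset.2 (Finset.empty_subset _)⟩⟩

lemma link_nonempty (hK : IsComplex K) (hρ : ρ ∈ K) : (link K ρ).Nonempty := by
  refine ⟨∅, ?_⟩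
  rw [link, Finset.mem_filter]
  exact ⟨hK ρ hρ ∅ (Finset.empty_subset _), by simpa using hρ, by simp⟩

lemma fwd_chain (hK : IsComplex K) (hρ : ρ ∈ K) (hρne : ρ ≠ ∅)
    {d' : Finset (Finset V)} (hd' : d' ∈ joinF (sd (boundary ρ)) (sd (link K ρ))) :
    insert ρ (Finset.image (fun μ : Finset V => if μ ⊆ ρ then μ else ρ ∪ μ) d') ∈ sd K := by
  have hKne : K.Nonempty := ⟨ρ, hρ⟩
  obtain ⟨a, ha, b, hb, rfl⟩ := mem_joinF.1 hd'
  rw [mem_sd' (boundary_nonempty hρne)] at ha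
  rw [mem_sd' (link_nonempty hK hρ)] at hb
  have hfact : ∀ y ∈ insert ρ (Finset.image
      (fun μ : Finset V => if μ ⊆ ρ then μ else ρ ∪ μ) (a ∪ b)),
      (y ∈ K ∧ y ≠ ∅) ∧
      ((y ⊆ ρ ∧ y ∈ a) ∨ (ρ ⊆ y ∧ (y = ρ ∨ ∃ μ ∈ b, y = ρ ∪ μ))) := by
    intro y hy
    rcases Finset.mem_insert.1 hy with rfl | hy
    · exact ⟨⟨hρ, hρne⟩, Or.inr ⟨Finset.Subset.refl _, Or.inl rfl⟩⟩
    · obtain ⟨μ, hμ, rfl⟩ := Finset.mem_image.1 hy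
      rcases Finset.mem_union.1 hμ with hμa | hμb
      · have h1 := ha.1 μ hμa
        have hsub : μ ⊆ ρ := Finset.mem_powerset.1 (Finset.mem_erase.1 h1.1).2
        rw [if_pos hsub]
        exact ⟨⟨hK ρ hρ μ hsub, h1.2⟩, Or.inl ⟨hsub, hμa⟩⟩
      · have h1 := hb.1 μ hμb
        rw [link, Finset.mem_filter] at h1
        have hdisj : ρ ∩ μ = ∅ := h1.1.2.2
        have hnsub : ¬ μ ⊆ ρ := fun hc =>
          h1.2 ((Finset.inter_eq_right.2 hc).symm.trans hdisj)
        rw [if_neg hnsub]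
        refine ⟨⟨h1.1.2.1, ?_⟩, Or.inr ⟨Finset.subset_union_left, Or.inr ⟨μ, hμb, rfl⟩⟩⟩
        intro hc
        exact hρne (by simpa using (Finset.union_eq_empty.1 hc).1)
  rw [mem_sd' hKne]
  refine ⟨fun y hy => (hfact y hy).1, fun y hy z hz => ?_⟩
  rcases (hfact y hy).2 with ⟨hy1, hy2⟩ | ⟨hy1, hy2⟩ <;>
    rcases (hfact z hz).2 with ⟨hz1, hz2⟩ | ⟨hz1, hz2⟩
  · exact ha.2 y hy2 z hz2
  · exact Or.inl (hy1.trans hz1)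
  · exact Or.inr (hz1.trans hy1)
  · rcases hy2 with rfl | ⟨μ, hμ, rfl⟩
    · exact Or.inl hz1
    · rcases hz2 with rfl | ⟨ν, hν, rfl⟩
      · exact Or.inr hy1
      · rcases hb.2 μ hμ ν hν with h | h
        · exact Or.inl (Finset.union_subset_union (Finset.Subset.refl _) h)
        · exact Or.inr (Finset.union_subset_union (Finset.Subset.refl _) h)

lemma back_chain (hK : IsComplex K) (hρ : ρ ∈ K) (hρne : ρ ≠ ∅)
    {d : Finset (Finset V)} (hd : d ∈ sd K) (hρd : ρ ∈ d) :
    (Finset.image (fun ν : Finset V => if ν ⊆ ρ then ν else ν \ ρ) (d.erase ρ))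
        ∈ joinF (sd (boundary ρ)) (sd (link K ρ)) ∧
      insert ρ (Finset.image (fun μ : Finset V => if μ ⊆ ρ then μ else ρ ∪ μ)
        (Finset.image (fun ν : Finset V => if ν ⊆ ρ then ν else ν \ ρ) (d.erase ρ))) = d := by
  have hKne : K.Nonempty := ⟨ρ, hρ⟩
  rw [mem_sd' hKne] at hd
  have helem : ∀ ν ∈ d.erase ρ, (ν ∈ K ∧ ν ≠ ∅) ∧
      (ν ⊆ ρ ∨ (ρ ⊆ ν ∧ ¬ ν ⊆ ρ ∧ ν \ ρ ≠ ∅)) := by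
    intro ν hν
    have hν' := Finset.mem_erase.1 hν
    refine ⟨hd.1 ν hν'.2, ?_⟩
    rcases hd.2 ν hν'.2 ρ hρd with h | h
    · exact Or.inl h
    · by_cases hc : ν ⊆ ρ
      · exact Or.inl hc
      · refine Or.inr ⟨h, hc, fun he => hc ?_⟩
        rwa [Finset.sdiff_eq_empty_iff_subset] at he
  constructor
  · rw [mem_joinF]
    refine ⟨(d.erase ρ).filter (· ⊆ ρ), ?_,
      ((d.erase ρ).filter (fun ν => ¬ ν ⊆ ρ)).image (· \ ρ), ?_, ?_⟩
    · rw [mem_sd' (boundary_nonempty hρne)]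
      constructor
      · intro ν hν
        rw [Finset.mem_filter] at hν
        exact ⟨Finset.mem_erase.2 ⟨(Finset.mem_erase.1 hν.1).1,
          Finset.mem_powerset.2 hν.2⟩, (helem ν hν.1).1.2⟩
      · intro y hy z hz
        rw [Finset.mem_filter] at hy hz
        exact hd.2 y (Finset.mem_erase.1 hy.1).2 z (Finset.mem_erase.1 hz.1).2
    · rw [mem_sd' (link_nonempty hK hρ)]
      constructor
      · intro y hy
        obtain ⟨ν, hν, rfl⟩ := Finset.mem_image.1 hy
        rw [Finset.mem_filter] at hν
        obtain ⟨⟨hνK, hνne⟩, hcomp⟩ := helem ν hν.1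
        rcases hcomp with h | ⟨h1, h2, h3⟩
        · exact absurd h hν.2
        · refine ⟨?_, h3⟩
          rw [link, Finset.mem_filter]
          refine ⟨hK ν hνK _ (Finset.sdiff_subset), ?_, Finset.inter_sdiff_self _ _⟩
          rwa [Finset.union_sdiff_of_subset h1]
      · intro y hy z hz
        obtain ⟨ν, hν, rfl⟩ := Finset.mem_image.1 hy
        obtain ⟨μ, hμ, rfl⟩ := Finset.mem_image.1 hz
        rw [Finset.mem_filter] at hν hμ
        rcases hd.2 ν (Finset.mem_erase.1 hν.1).2 μ (Finset.mem_erase.1 hμ.1).2 with h | h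
        · exact Or.inl (Finset.sdiff_subset_sdiff h (Finset.Subset.refl _))
        · exact Or.inr (Finset.sdiff_subset_sdiff h (Finset.Subset.refl _))
    · nth_rewrite 3 [← Finset.filter_union_filter_not_eq (fun ν : Finset V => ν ⊆ ρ) (d.erase ρ)]
      rw [Finset.image_union]
      congr 1
      · refine ((Finset.image_congr ?_).trans Finset.image_id).symm
        intro ν hν
        rw [Finset.coe_filter] at hν
        simp only [if_pos hν.2]
        rfl
      · refine (Finset.image_congr ?_).symm
        intro ν hν
        rw [Finset.coe_filter] at hν
        simp only [if_neg hν.2]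
  · rw [Finset.image_image]
    have heq : Finset.image ((fun μ : Finset V => if μ ⊆ ρ then μ else ρ ∪ μ) ∘
        (fun ν : Finset V => if ν ⊆ ρ then ν else ν \ ρ)) (d.erase ρ) = d.erase ρ := by
      refine (Finset.image_congr ?_).trans Finset.image_id
      intro ν hν
      rw [Finset.mem_coe] at hν
      obtain ⟨-, hcomp⟩ := helem ν hν
      simp only [Function.comp]
      rcases hcomp with h | ⟨h1, h2, h3⟩
      · rw [if_pos h, if_pos h]; rfl
      · rw [if_neg h2, if_neg (fun hc : ν \ ρ ⊆ ρ => h3 (by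
          rw [Finset.eq_empty_iff_forall_notMem]
          intro y hy
          exact (Finset.mem_sdiff.1 hy).2 (hc hy)))]
        exact Finset.union_sdiff_of_subset h1
    rw [heq, Finset.insert_erase hρd]

lemma star_image_char (hK : IsComplex K) (ρ v x : Finset V) (hρ : ρ ∈ K) (hρne : ρ ≠ ∅)
    (hvρ : v ≠ ρ)
    (hxJ : ({x} : Finset (Finset V)) ∈ joinF (sd (boundary ρ)) (sd (link K ρ)))
    (hgv : (if v ⊆ ρ then v else v \ ρ) = x)
    (hhx : (if x ⊆ ρ then x else ρ ∪ x) = v)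
    {c : Finset (Finset (Finset V))} :
    c ∈ Finset.image
        (Finset.image fun d : Finset (Finset V) =>
          insert ρ (Finset.image (fun μ : Finset V => if μ ⊆ ρ then μ else ρ ∪ μ) d))
        (star (sd (joinF (sd (boundary ρ)) (sd (link K ρ)))) {{x}}) ↔
      c ∈ sd (sd K) ∧ ∀ d ∈ c, ρ ∈ d ∧ v ∈ d := by
  have hKne : K.Nonempty := ⟨ρ, hρ⟩
  have hJne : (joinF (sd (boundary ρ)) (sd (link K ρ))).Nonempty := ⟨_, hxJ⟩
  rw [Finset.mem_image]
  constructor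
  · rintro ⟨c', hc', rfl⟩
    rw [mem_star_sd_singleton hJne hxJ] at hc'
    obtain ⟨hc'sd, hc'x⟩ := hc'
    have hc'sd' := (mem_sd' hJne).1 hc'sd
    constructor
    · rw [mem_sd' (sd_nonempty hKne)]
      constructor
      · intro d hd
        obtain ⟨d', hd', rfl⟩ := Finset.mem_image.1 hd
        exact ⟨fwd_chain hK hρ hρne (hc'sd'.1 d' hd').1, Finset.insert_ne_empty _ _⟩
      · intro y hy z hz
        obtain ⟨y', hy', rfl⟩ := Finset.mem_image.1 hy
        obtain ⟨z', hz', rfl⟩ := Finset.mem_image.1 hz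
        rcases hc'sd'.2 y' hy' z' hz' with h | h
        · exact Or.inl (Finset.insert_subset_insert _ (Finset.image_subset_image h))
        · exact Or.inr (Finset.insert_subset_insert _ (Finset.image_subset_image h))
    · intro d hd
      obtain ⟨d', hd', rfl⟩ := Finset.mem_image.1 hd
      refine ⟨Finset.mem_insert_self _ _, ?_⟩
      have hxd' := Finset.mem_image_of_mem
        (fun μ : Finset V => if μ ⊆ ρ then μ else ρ ∪ μ) (hc'x d' hd')
      refine Finset.mem_insert_of_mem ?_
      rw [← hhx]
      exact hxd'
  · rintro ⟨hcsd, hcv⟩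
    have hcsd' := (mem_sd' (sd_nonempty hKne)).1 hcsd
    refine ⟨c.image (fun d => (d.erase ρ).image
      (fun ν : Finset V => if ν ⊆ ρ then ν else ν \ ρ)), ?_, ?_⟩
    · rw [mem_star_sd_singleton hJne hxJ]
      have hmemx : ∀ d ∈ c, x ∈ (d.erase ρ).image
          (fun ν : Finset V => if ν ⊆ ρ then ν else ν \ ρ) := by
        intro d hd
        have hvd : v ∈ d.erase ρ := Finset.mem_erase.2 ⟨hvρ, (hcv d hd).2⟩
        have := Finset.mem_image_of_mem
          (fun ν : Finset V => if ν ⊆ ρ then ν else ν \ ρ) hvd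
        rw [← hgv]
        exact this
      constructor
      · rw [mem_sd' hJne]
        constructor
        · intro d' hd'
          obtain ⟨d, hd, rfl⟩ := Finset.mem_image.1 hd'
          exact ⟨(back_chain hK hρ hρne (hcsd'.1 d hd).1 (hcv d hd).1).1,
            Finset.ne_empty_of_mem (hmemx d hd)⟩
        · intro y hy z hz
          obtain ⟨y', hy', rfl⟩ := Finset.mem_image.1 hy
          obtain ⟨z', hz', rfl⟩ := Finset.mem_image.1 hz
          rcases hcsd'.2 y' hy' z' hz' with h | h
          · exact Or.inl (Finset.image_subset_image (Finset.erase_subset_erase _ h))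
          · exact Or.inr (Finset.image_subset_image (Finset.erase_subset_erase _ h))
      · intro d' hd'
        obtain ⟨d, hd, rfl⟩ := Finset.mem_image.1 hd'
        exact hmemx d hd
    · rw [Finset.image_image]
      refine (Finset.image_congr ?_).trans Finset.image_id
      intro d hd
      rw [Finset.mem_coe] at hd
      simp only [Function.comp]
      exact (back_chain hK hρ hρne (hcsd'.1 d hd).1 (hcv d hd).1).2

end PerChain


/-- **Corollary.** For distinct nonempty simplices `σ ≠ τ` of `K`,
`st_{sd² K}(σ̂̂) ∩ st_{sd² K}(τ̂̂) = lk_{sd² K}(σ̂̂) ∩ lk_{sd² K}(τ̂̂)`; it contains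
a nonempty simplex iff `σ` is a face of `τ` or vice-versa, in which case (say
`σ ⊆ τ`) it is the image of `N(τ̂, sd(∂σ) * sd(lk_K(σ)))`
(resp. `N(σ̂, sd(∂τ) * sd(lk_K(τ)))`) under the isomorphism of the links induced
by `λ ↦ σ * λ` (resp. `λ ↦ τ * λ`). -/
theorem stars_intersection_in_sd_sd
    {V : Type*} [DecidableEq V] (K : Finset (Finset V)) (hK : IsComplex K)
    (σ τ : Finset V) (hσ : σ ∈ K) (hτ : τ ∈ K) (hσne : σ ≠ ∅) (hτne : τ ≠ ∅)
    (hne : σ ≠ τ) :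
    star (sd (sd K)) {{σ}} ∩ star (sd (sd K)) {{τ}} =
      link (sd (sd K)) {{σ}} ∩ link (sd (sd K)) {{τ}} ∧
    ((∃ c ∈ star (sd (sd K)) {{σ}} ∩ star (sd (sd K)) {{τ}}, c ≠ ∅) ↔
      (σ ⊆ τ ∨ τ ⊆ σ)) ∧
    (σ ⊆ τ →
      star (sd (sd K)) {{σ}} ∩ star (sd (sd K)) {{τ}} =
        Finset.image
          (Finset.image fun c : Finset (Finset V) =>
            insert σ
              (Finset.image (fun μ : Finset V => if μ ⊆ σ then μ else σ ∪ μ) c))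
          (star (sd (joinF (sd (boundary σ)) (sd (link K σ)))) {{τ \ σ}}) ∧
      star (sd (sd K)) {{σ}} ∩ star (sd (sd K)) {{τ}} =
        Finset.image
          (Finset.image fun c : Finset (Finset V) =>
            insert τ
              (Finset.image (fun μ : Finset V => if μ ⊆ τ then μ else τ ∪ μ) c))
          (star (sd (joinF (sd (boundary τ)) (sd (link K τ)))) {{σ}})) := by
  have hKne : K.Nonempty := ⟨σ, hσ⟩
  have hsdne : (sd K).Nonempty := sd_nonempty hKne
  have hσsd : ({σ} : Finset (Finset V)) ∈ sd K := by
    rw [mem_sd' hKne]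
    refine ⟨fun a ha => ?_, fun a ha b hb => ?_⟩
    · rw [Finset.mem_singleton] at ha; subst ha; exact ⟨hσ, hσne⟩
    · rw [Finset.mem_singleton] at ha hb; subst ha; subst hb; exact Or.inl (Finset.Subset.refl _)
  have hτsd : ({τ} : Finset (Finset V)) ∈ sd K := by
    rw [mem_sd' hKne]
    refine ⟨fun a ha => ?_, fun a ha b hb => ?_⟩
    · rw [Finset.mem_singleton] at ha; subst ha; exact ⟨hτ, hτne⟩
    · rw [Finset.mem_singleton] at ha hb; subst ha; subst hb; exact Or.inl (Finset.Subset.refl _)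
  have hchar : ∀ c : Finset (Finset (Finset V)),
      c ∈ star (sd (sd K)) {{σ}} ∩ star (sd (sd K)) {{τ}} ↔
        c ∈ sd (sd K) ∧ ∀ d ∈ c, σ ∈ d ∧ τ ∈ d := by
    intro c
    rw [Finset.mem_inter, mem_star_sd_singleton hsdne hσsd, mem_star_sd_singleton hsdne hτsd]
    constructor
    · rintro ⟨⟨h1, h2⟩, ⟨-, h3⟩⟩
      exact ⟨h1, fun d hd => ⟨h2 d hd, h3 d hd⟩⟩
    · rintro ⟨h1, h2⟩
      exact ⟨⟨h1, fun d hd => (h2 d hd).1⟩, ⟨h1, fun d hd => (h2 d hd).2⟩⟩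
  refine ⟨?_, ?_, ?_⟩
  · ext c
    constructor
    · intro hc
      have h := (hchar c).1 hc
      rw [Finset.mem_inter, mem_link_sd_singleton hsdne hσsd, mem_link_sd_singleton hsdne hτsd]
      refine ⟨⟨⟨h.1, fun d hd => (h.2 d hd).1⟩, fun hmem => hne ?_⟩,
        ⟨h.1, fun d hd => (h.2 d hd).2⟩, fun hmem => hne ?_⟩
      · exact (Finset.mem_singleton.1 (h.2 _ hmem).2).symm
      · exact Finset.mem_singleton.1 (h.2 _ hmem).1
    · intro hc
      rw [Finset.mem_inter, mem_link_sd_singleton hsdne hσsd, mem_link_sd_singleton hsdne hτsd] at hc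
      exact (hchar c).2 ⟨hc.1.1.1, fun d hd => ⟨hc.1.1.2 d hd, hc.2.1.2 d hd⟩⟩
  · constructor
    · rintro ⟨c, hc, hcne⟩
      have h := (hchar c).1 hc
      obtain ⟨d, hd⟩ := Finset.nonempty_iff_ne_empty.2 hcne
      obtain ⟨hσd, hτd⟩ := h.2 d hd
      have hdsd := ((mem_sd' hsdne).1 h.1).1 d hd
      exact ((mem_sd' hKne).1 hdsd.1).2 σ hσd τ hτd
    · intro hστ
      refine ⟨{(insert σ {τ} : Finset (Finset V))}, (hchar _).2 ⟨?_, ?_⟩,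
        Finset.singleton_ne_empty _⟩
      · rw [mem_sd' hsdne]
        refine ⟨fun a ha => ?_, fun a ha b hb => ?_⟩
        · rw [Finset.mem_singleton] at ha; subst ha
          refine ⟨?_, Finset.insert_ne_empty _ _⟩
          rw [mem_sd' hKne]
          have hmem : ∀ y ∈ insert σ ({τ} : Finset (Finset V)), y = σ ∨ y = τ := by
            intro y hy
            rcases Finset.mem_insert.1 hy with h | h
            · exact Or.inl h
            · exact Or.inr (Finset.mem_singleton.1 h)
          refine ⟨fun y hy => ?_, fun y hy z hz => ?_⟩
          · rcases hmem y hy with rfl | rfl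
            · exact ⟨hσ, hσne⟩
            · exact ⟨hτ, hτne⟩
          · rcases hmem y hy with rfl | rfl <;> rcases hmem z hz with rfl | rfl
            · exact Or.inl (Finset.Subset.refl _)
            · exact hστ
            · exact hστ.symm
            · exact Or.inl (Finset.Subset.refl _)
        · rw [Finset.mem_singleton] at ha hb; subst ha; subst hb
          exact Or.inl (Finset.Subset.refl _)
      · intro d hd
        rw [Finset.mem_singleton] at hd; subst hd
        exact ⟨Finset.mem_insert_self _ _, Finset.mem_insert_of_mem (Finset.mem_singleton_self _)⟩
  · intro hστ
    have hτσ : ¬ τ ⊆ σ := fun h => hne (Finset.Subset.antisymm hστ h)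
    have hτσne : τ \ σ ≠ ∅ := fun h => hτσ (Finset.sdiff_eq_empty_iff_subset.1 h)
    have hτσnsub : ¬ (τ \ σ) ⊆ σ := by
      intro h
      apply hτσne
      rw [Finset.eq_empty_iff_forall_notMem]
      intro y hy
      exact (Finset.mem_sdiff.1 hy).2 (h hy)
    have hx1 : ({τ \ σ} : Finset (Finset V)) ∈ joinF (sd (boundary σ)) (sd (link K σ)) := by
      rw [mem_joinF]
      refine ⟨∅, empty_mem_sd (boundary_nonempty hσne), {τ \ σ}, ?_, by simp⟩
      rw [mem_sd' (link_nonempty hK hσ)]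
      refine ⟨fun a ha => ?_, fun a ha b hb => ?_⟩
      · rw [Finset.mem_singleton] at ha; subst ha
        refine ⟨?_, hτσne⟩
        rw [link, Finset.mem_filter]
        refine ⟨hK τ hτ _ Finset.sdiff_subset, ?_, Finset.inter_sdiff_self _ _⟩
        rwa [Finset.union_sdiff_of_subset hστ]
      · rw [Finset.mem_singleton] at ha hb; subst ha; subst hb
        exact Or.inl (Finset.Subset.refl _)
    have hx2 : ({σ} : Finset (Finset V)) ∈ joinF (sd (boundary τ)) (sd (link K τ)) := by
      rw [mem_joinF]
      refine ⟨{σ}, ?_, ∅, empty_mem_sd (link_nonempty hK hτ), by simp⟩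
      rw [mem_sd' (boundary_nonempty hτne)]
      refine ⟨fun a ha => ?_, fun a ha b hb => ?_⟩
      · rw [Finset.mem_singleton] at ha; subst ha
        exact ⟨Finset.mem_erase.2 ⟨hne, Finset.mem_powerset.2 hστ⟩, hσne⟩
      · rw [Finset.mem_singleton] at ha hb; subst ha; subst hb
        exact Or.inl (Finset.Subset.refl _)
    constructor
    · ext c
      rw [hchar c, star_image_char hK σ τ (τ \ σ) hσ hσne (Ne.symm hne) hx1
        (if_neg hτσ) (by rw [if_neg hτσnsub]; exact Finset.union_sdiff_of_subset hστ)]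
    · ext c
      rw [hchar c, star_image_char hK τ σ σ hτ hτne hne hx2
        (if_pos hστ) (if_pos hστ)]
      constructor <;> rintro ⟨h1, h2⟩ <;>
        exact ⟨h1, fun d hd => ⟨(h2 d hd).2, (h2 d hd).1⟩⟩


end MorseShelling
end

section
/- Let T = σ * θ̊ * τ̇ be a Morse tile, written in its unique decomposition as the join of a closed simplex σ, an open simplex θ̊ and a closed simplex τ of non-vanishing dimension deprived of its empty face. Then for every vertex v of the underlying simplex σ * θ * τ, the map λ ∈ lk_T(v) ↦ v * λ ∈ st_T(v) induces an isomorphism of relative simplicial complexes sd(lk_T(v)) → lk_{sd(T)}(v̂). -/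
/-!
Common combinatorial framework for Morse shellings of simplicial complexes,
following J.-Y. Welschinger, "Morse shellings out of discrete Morse functions".
-/

namespace MorseShelling

variable {V : Type*} [DecidableEq V] {W : Type*} [DecidableEq W]

/-!
Inserting `v` into every face of a flag of nonempty faces of `lk(v)` gives a flag of faces of
the complex strictly containing `{v}`, i.e. a simplex of the link of the vertex `{v}` of the
barycentric subdivision, and erasing `v` undoes it. This works in any simplicial complex, hence
in both members `K` and `L` of the Morse tile, which are complexes since joins, closed, open and
dotted simplices are.
-/

lemma isComplex_powerset {α : Type*} (s : Finset α) : IsComplex s.powerset :=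
  fun _ ha _ hb => Finset.mem_powerset.2 (hb.trans (Finset.mem_powerset.1 ha))

lemma isComplex_empty {α : Type*} : IsComplex (∅ : Finset (Finset α)) :=
  fun _ ha => absurd ha (Finset.notMem_empty _)

lemma isComplex_boundary (s : Finset V) : IsComplex (boundary s) := by
  intro a ha b hb
  simp only [boundary, Finset.mem_erase, Finset.mem_powerset] at ha ⊢
  exact ⟨fun hbs => ha.1 (ha.2.antisymm (hbs ▸ hb)), hb.trans ha.2⟩

lemma isComplex_union {K₁ K₂ : Finset (Finset V)} (h₁ : IsComplex K₁) (h₂ : IsComplex K₂) :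
    IsComplex (K₁ ∪ K₂) := by
  intro a ha b hb
  rcases Finset.mem_union.1 ha with ha | ha
  exacts [Finset.mem_union_left _ (h₁ a ha b hb), Finset.mem_union_right _ (h₂ a ha b hb)]

lemma isComplex_joinF {K₁ K₂ : Finset (Finset V)} (h₁ : IsComplex K₁) (h₂ : IsComplex K₂) :
    IsComplex (joinF K₁ K₂) := by
  intro μ hμ ν hν
  simp only [joinF, Finset.mem_image, Finset.mem_product, Prod.exists] at hμ ⊢
  obtain ⟨a, b, ⟨ha, hb⟩, rfl⟩ := hμ
  refine ⟨ν ∩ a, ν ∩ b, ⟨h₁ a ha _ Finset.inter_subset_right,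
    h₂ b hb _ Finset.inter_subset_right⟩, ?_⟩
  rw [← Finset.inter_union_distrib_left, Finset.inter_eq_left.2 hν]

lemma RelCplx.isComplex_join_L {S₁ S₂ : RelCplx V} (hK₁ : IsComplex S₁.K)
    (hL₁ : IsComplex S₁.L) (hK₂ : IsComplex S₂.K) (hL₂ : IsComplex S₂.L) :
    IsComplex (S₁.join S₂).L :=
  isComplex_union (isComplex_joinF hL₁ hK₂) (isComplex_joinF hK₁ hL₂)

lemma isComplex_dotT_L (s : Finset V) : IsComplex (dotT s).L := by
  simp only [dotT]
  split_ifs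
  exacts [isComplex_empty, Finset.powerset_empty (α := V) ▸ isComplex_powerset ∅]

lemma isComplex_splitTile_K (σ θ τ : Finset V) : IsComplex (splitTile σ θ τ).K :=
  isComplex_joinF (isComplex_powerset σ)
    (isComplex_joinF (isComplex_powerset θ) (isComplex_powerset τ))

lemma isComplex_splitTile_L (σ θ τ : Finset V) : IsComplex (splitTile σ θ τ).L :=
  RelCplx.isComplex_join_L (isComplex_powerset σ) isComplex_empty
    (isComplex_joinF (isComplex_powerset θ) (isComplex_powerset τ))
    (RelCplx.isComplex_join_L (isComplex_powerset θ) (isComplex_boundary θ)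
      (isComplex_powerset τ) (isComplex_dotT_L τ))

lemma mem_sd_iff {K : Finset (Finset V)} {c : Finset (Finset V)} :
    c ∈ sd K ↔ K ≠ ∅ ∧ (∀ a ∈ c, a ∈ K ∧ a ≠ ∅) ∧ ∀ a ∈ c, ∀ b ∈ c, a ⊆ b ∨ b ⊆ a := by
  unfold sd
  split_ifs with h
  · simp [h]
  · simp [h, Finset.subset_iff, and_comm]

lemma isComplex_sd (K : Finset (Finset V)) : IsComplex (sd K) := by
  intro c hc d hdc
  rw [mem_sd_iff] at hc ⊢
  obtain ⟨hK, hfaces, hchain⟩ := hc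
  exact ⟨hK, fun a ha => hfaces a (hdc ha), fun a ha b hb => hchain a (hdc ha) b (hdc hb)⟩

lemma mem_link_singleton_iff {K : Finset (Finset V)} (hK : IsComplex K) {v : V}
    {a : Finset V} : a ∈ link K {v} ↔ v ∉ a ∧ insert v a ∈ K := by
  simp only [link, Finset.mem_filter, ← Finset.insert_eq,
    ← Finset.disjoint_iff_inter_eq_empty, Finset.disjoint_singleton_left]
  exact ⟨fun h => ⟨h.2.2, h.2.1⟩, fun h => ⟨hK _ h.2 _ (Finset.subset_insert v a), h.2, h.1⟩⟩

lemma link_singleton_ne_empty_iff {K : Finset (Finset V)} (hK : IsComplex K) {v : V} :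
    link K {v} ≠ ∅ ↔ {v} ∈ K := by
  refine ⟨fun h => ?_, fun h => Finset.ne_empty_of_mem (a := ∅) ?_⟩
  · obtain ⟨a, ha⟩ := Finset.nonempty_iff_ne_empty.2 h
    exact hK _ ((mem_link_singleton_iff hK).1 ha).2 _ (by simp)
  · exact (mem_link_singleton_iff hK).2 ⟨Finset.notMem_empty v, h⟩

lemma mem_sd_link_singleton_iff {K : Finset (Finset V)} (hK : IsComplex K) {v : V}
    {c : Finset (Finset V)} :
    c ∈ sd (link K {v}) ↔ {v} ∈ K ∧ (∀ a ∈ c, a ≠ ∅ ∧ v ∉ a ∧ insert v a ∈ K) ∧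
      ∀ a ∈ c, ∀ b ∈ c, a ⊆ b ∨ b ⊆ a := by
  simp only [mem_sd_iff, link_singleton_ne_empty_iff hK, mem_link_singleton_iff hK]
  grind

lemma mem_link_sd_singleton_iff {K : Finset (Finset V)} {v : V}
    {c : Finset (Finset V)} :
    c ∈ link (sd K) {{v}} ↔ {v} ∈ K ∧ (∀ b ∈ c, v ∈ b ∧ b ≠ {v} ∧ b ∈ K) ∧
      ∀ a ∈ c, ∀ b ∈ c, a ⊆ b ∨ b ⊆ a := by
  -- a nonempty face is comparable with `{v}` iff it contains `v`, and lies in `{v}` iff it is `{v}`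
  simp only [mem_link_singleton_iff (isComplex_sd K), mem_sd_iff, Finset.forall_mem_insert,
    Finset.singleton_subset_iff, Finset.subset_singleton_iff]
  grind

lemma sd_link_bijOn {K : Finset (Finset V)} (hK : IsComplex K) (v : V) :
    Set.BijOn (fun c : Finset (Finset V) => c.image (insert v))
      ↑(sd (link K {v})) ↑(link (sd K) {({v} : Finset V)}) := by
  refine Set.InvOn.bijOn (f' := fun c => c.image (·.erase v)) ⟨fun c hc => ?_, fun c hc => ?_⟩
    (fun c hc => ?_) (fun c hc => ?_)
  · rw [Finset.mem_coe, mem_sd_link_singleton_iff hK] at hc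
    simp only [Finset.image_image]
    exact (Finset.image_congr fun a ha => Finset.erase_insert (hc.2.1 a ha).2.1).trans
      Finset.image_id'
  · rw [Finset.mem_coe, mem_link_sd_singleton_iff] at hc
    simp only [Finset.image_image]
    exact (Finset.image_congr fun b hb => Finset.insert_erase (hc.2.1 b hb).1).trans
      Finset.image_id'
  · rw [Finset.mem_coe, mem_sd_link_singleton_iff hK] at hc
    rw [Finset.mem_coe, mem_link_sd_singleton_iff]
    obtain ⟨hvK, hfaces, hchain⟩ := hc
    simp only [Finset.forall_mem_image]
    refine ⟨hvK, fun a ha => ⟨Finset.mem_insert_self v a, fun h => ?_, (hfaces a ha).2.2⟩,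
      fun a ha b hb => (hchain a ha b hb).imp (Finset.insert_subset_insert v)
        (Finset.insert_subset_insert v)⟩
    obtain ⟨ha_ne, hva, -⟩ := hfaces a ha
    exact ha_ne (by rw [← Finset.erase_insert hva, h, Finset.erase_singleton])
  · rw [Finset.mem_coe, mem_link_sd_singleton_iff] at hc
    rw [Finset.mem_coe, mem_sd_link_singleton_iff hK]
    obtain ⟨hvK, hfaces, hchain⟩ := hc
    simp only [Finset.forall_mem_image]
    refine ⟨hvK, fun b hb => ?_, fun a ha b hb => (hchain a ha b hb).imp
      (Finset.erase_subset_erase v) (Finset.erase_subset_erase v)⟩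
    obtain ⟨hvb, hb_ne, hbK⟩ := hfaces b hb
    refine ⟨fun h => ?_, Finset.notMem_erase v b, (Finset.insert_erase hvb).symm ▸ hbK⟩
    rcases (Finset.erase_eq_empty_iff b v).1 h with rfl | rfl
    exacts [Finset.notMem_empty v hvb, hb_ne rfl]

theorem RelCplx.isRelIso_sdR_linkR_singleton {S : RelCplx V} (hK : IsComplex S.K)
    (hL : IsComplex S.L) (v : V) :
    IsRelIso (fun μ : Finset V => insert v μ) ((S.linkR {v}).sdR)
      (S.sdR.linkR {({v} : Finset V)}) :=
  ⟨sd_link_bijOn hK v, sd_link_bijOn hL v⟩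

theorem link_in_sd_of_morse_tile_general
    {V : Type*} [DecidableEq V] (σ θ τ : Finset V) (v : V) :
    IsRelIso (fun μ : Finset V => insert v μ)
      (((splitTile σ θ τ).linkR {v}).sdR)
      (((splitTile σ θ τ).sdR).linkR {({v} : Finset V)}) :=
  RelCplx.isRelIso_sdR_linkR_singleton (isComplex_splitTile_K σ θ τ)
    (isComplex_splitTile_L σ θ τ) v

/-- **Corollary.** For every vertex `v` of the simplex underlying the Morse tile
`T = σ * θ̊ * τ̇`, the map `λ ∈ lk_T(v) ↦ v * λ` induces an isomorphism of
relative simplicial complexes `sd(lk_T(v)) → lk_{sd T}(v̂)`. -/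
theorem link_in_sd_of_morse_tile
    {V : Type*} [DecidableEq V] (σ θ τ : Finset V)
    (h₁ : Disjoint σ θ) (h₂ : Disjoint σ τ) (h₃ : Disjoint θ τ)
    (hdim : τ = ∅ ∨ 2 ≤ τ.card) (v : V) (hv : v ∈ σ ∪ θ ∪ τ) :
    IsRelIso (fun μ : Finset V => insert v μ)
      (((splitTile σ θ τ).linkR {v}).sdR)
      (((splitTile σ θ τ).sdR).linkR {({v} : Finset V)}) :=
  link_in_sd_of_morse_tile_general σ θ τ v

end MorseShelling
end
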